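/- For every even natural number n ≥ 2, the chromatic index of the complete graph K_n on n vertices equals n − 1. -/

import Mathlib

/-!
The edges at one vertex pairwise meet, so they form a clique of size `n - 1` in the line graph.
Conversely, with `m = n - 1` odd, identify the vertices with `ZMod m ∪ {∞}` and colour an edge
`{a, b}` by `a + b` and an edge `{a, ∞}` by `2 a` (the round-robin schedule). At a finite vertex
`v` the colours `v + b` (`b ≠ v`) and `2 v` are pairwise distinct, and at `∞` the colours `2 a`
are distinct because `2` is invertible modulo the odd number `m`.
-/

theorem ZMod.add_self_injective {m : ℕ} (hm : Odd m) :
    Function.Injective fun a : ZMod m => a + a := by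
  have h2 : IsUnit (2 : ZMod m) := by
    exact_mod_cast (ZMod.isUnit_iff_coprime 2 m).mpr hm.coprime_two_left
  intro a b h
  simpa [← two_mul, h2.mul_right_inj] using h

namespace SimpleGraph

variable {V : Type*}

def incidenceSetHomLineGraph (G : SimpleGraph V) (v : V) :
    (⊤ : SimpleGraph (G.incidenceSet v)) →g G.lineGraph where
  toFun e := ⟨e, G.incidenceSet_subset v e.2⟩
  map_rel' {e₁ e₂} hne := lineGraph_adj_iff_exists.mpr
    ⟨fun h => hne (by simpa [Subtype.ext_iff] using h), v, e₁.2.2, e₂.2.2⟩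

theorem degree_le_chromaticNumber_lineGraph [DecidableEq V] (G : SimpleGraph V) (v : V)
    [Fintype (G.neighborSet v)] : (G.degree v : ℕ∞) ≤ G.lineGraph.chromaticNumber := by
  rw [← card_incidenceSet_eq_degree, ← chromaticNumber_top]
  exact chromaticNumber_mono_of_hom (G.incidenceSetHomLineGraph v)

def lineGraphColoring {α : Type*} (G : SimpleGraph V) (c : Sym2 V → α)
    (hc : ∀ ⦃v a b⦄, G.Adj v a → G.Adj v b → a ≠ b → c s(v, a) ≠ c s(v, b)) :
    G.lineGraph.Coloring α :=
  Coloring.mk (fun e => c e) <| by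
    rintro ⟨e₁, he₁⟩ ⟨e₂, he₂⟩ hadj
    obtain ⟨hne, v, hv₁, hv₂⟩ := lineGraph_adj_iff_exists.mp hadj
    obtain ⟨a, rfl⟩ := Sym2.mem_iff_exists.mp hv₁
    obtain ⟨b, rfl⟩ := Sym2.mem_iff_exists.mp hv₂
    exact hc he₁ he₂ (by rintro rfl; exact hne rfl)

section RoundRobin

variable {A : Type*} [AddCommGroup A]

def roundRobinColor : Option A → Option A → A
  | some a, some b => a + b
  | some a, none | none, some a => a + a
  | none, none => 0

theorem roundRobinColor_comm (x y : Option A) : roundRobinColor x y = roundRobinColor y x := by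
  rcases x with _ | a <;> rcases y with _ | b <;> simp [roundRobinColor, add_comm]

theorem roundRobinColor_ne (h2 : Function.Injective fun a : A => a + a) {v x y : Option A}
    (hx : v ≠ x) (hy : v ≠ y) (hxy : x ≠ y) :
    roundRobinColor v x ≠ roundRobinColor v y := by
  rcases v with _ | v <;> rcases x with _ | a <;> rcases y with _ | b <;>
    simp_all [roundRobinColor, h2.eq_iff, eq_comm]

theorem colorable_lineGraph_top_option [Fintype A] (h2 : Function.Injective fun a : A => a + a) :
    (⊤ : SimpleGraph (Option A)).lineGraph.Colorable (Fintype.card A) :=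
  (lineGraphColoring ⊤ (Sym2.lift ⟨roundRobinColor, roundRobinColor_comm⟩)
    fun _ _ _ hx hy hxy => roundRobinColor_ne h2 hx hy hxy).colorable

end RoundRobin

theorem chromaticNumber_lineGraph_top_of_card_eq_succ [Fintype V] {m : ℕ} (hm : Odd m)
    (hV : Fintype.card V = m + 1) : (⊤ : SimpleGraph V).lineGraph.chromaticNumber = m := by
  classical
  have : NeZero m := ⟨hm.pos.ne'⟩
  apply le_antisymm
  · have e : V ≃ Option (ZMod m) := Fintype.equivOfCardEq (by simp [hV, ZMod.card])
    rw [chromaticNumber_congr (Iso.completeGraph e).lineGraph]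
    simpa [ZMod.card] using
      (colorable_lineGraph_top_option (ZMod.add_self_injective hm)).chromaticNumber_le
  · obtain ⟨v⟩ : Nonempty V := Fintype.card_pos_iff.mp (by omega)
    simpa [complete_graph_degree, hV] using
      (⊤ : SimpleGraph V).degree_le_chromaticNumber_lineGraph v

end SimpleGraph

/-- For every even `n ≥ 2`, the chromatic index of the complete graph `K_n`
(the chromatic number of its line graph) equals `n - 1`. -/
theorem chromatic_index_complete_even (n : ℕ) (hn : 2 ≤ n) (he : Even n) :
    ((⊤ : SimpleGraph (Fin n)).lineGraph).chromaticNumber = ((n - 1 : ℕ) : ℕ∞) :=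
  SimpleGraph.chromaticNumber_lineGraph_top_of_card_eq_succ
    (Nat.Even.sub_odd (by omega) he odd_one) ((Fintype.card_fin n).trans (by omega))
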